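/- There exists a constant M such that for all sufficiently large j, ∑_{l ≠ j} λ_l / |λ_l − λ_j| ≤ M·j·log j, where λ_j = C/j^{1+α} for some constants C, α > 0. -/

import Mathlib

private lemma key_ineq (α : ℝ) (hα : 0 < α) (x : ℝ) (hx : 1 ≤ x) :
    α * (x + 1) ^ (-(1 + α)) ≤ x ^ (-α) - (x + 1) ^ (-α) := by
  have hx0 : (0:ℝ) < x := by linarith
  have hy : (0:ℝ) < x + 1 := by linarith
  have ht : (0:ℝ) < x / (x + 1) := by positivity
  have hlog : -Real.log (x / (x + 1)) ≥ 1 / (x + 1) := by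
    have h1 : Real.log (x / (x + 1)) ≤ x / (x + 1) - 1 := Real.log_le_sub_one_of_pos ht
    have : x / (x + 1) - 1 = -(1 / (x + 1)) := by field_simp; ring
    linarith [this ▸ h1]
  have h3 : 1 + α / (x + 1) ≤ (x / (x + 1)) ^ (-α) := by
    have he : (x / (x + 1)) ^ (-α) = Real.exp (-α * Real.log (x / (x + 1))) := by
      rw [Real.rpow_def_of_pos ht]; ring_nf
    have h4 : (-α * Real.log (x / (x + 1))) + 1 ≤ Real.exp (-α * Real.log (x / (x + 1))) :=
      Real.add_one_le_exp _
    have h5 : α / (x + 1) ≤ -α * Real.log (x / (x + 1)) := by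
      calc α / (x + 1) = α * (1 / (x + 1)) := by ring
        _ ≤ α * (-Real.log (x / (x + 1))) := mul_le_mul_of_nonneg_left hlog hα.le
        _ = -α * Real.log (x / (x + 1)) := by ring
    rw [he]; linarith
  have hxeq : x ^ (-α) = (x / (x + 1)) ^ (-α) * (x + 1) ^ (-α) := by
    rw [← Real.mul_rpow (le_of_lt ht) hy.le]
    congr 1
    field_simp
  have hpos : (0:ℝ) < (x + 1) ^ (-α) := Real.rpow_pos_of_pos hy _
  have h6 : (1 + α / (x + 1)) * (x + 1) ^ (-α) ≤ x ^ (-α) := by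
    rw [hxeq]; exact mul_le_mul_of_nonneg_right h3 hpos.le
  have h7 : (x + 1) ^ (-(1 + α)) = (x + 1) ^ (-α) / (x + 1) := by
    rw [show -(1 + α) = -α + -1 by ring, Real.rpow_add hy, Real.rpow_neg_one]
    ring
  rw [h7]
  have : (1 + α / (x + 1)) * (x + 1) ^ (-α) = (x + 1) ^ (-α) + α * ((x + 1) ^ (-α) / (x + 1)) := by
    field_simp
  linarith [this ▸ h6]

private lemma tail_sum (α : ℝ) (hα : 0 < α) (m : ℕ) (hm : 1 ≤ m) (K : ℕ) :
    ∑ l ∈ Finset.Ioc m K, ((l : ℝ)) ^ (-(1 + α)) ≤ (m : ℝ) ^ (-α) / α := by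
  suffices h : α * ∑ l ∈ Finset.Ioc m K, ((l : ℝ)) ^ (-(1 + α)) ≤
      (m : ℝ) ^ (-α) - ((max m K : ℕ) : ℝ) ^ (-α) by
    have hnn : (0:ℝ) ≤ ((max m K : ℕ) : ℝ) ^ (-α) := Real.rpow_nonneg (by positivity) _
    rw [le_div_iff₀ hα]
    nlinarith
  induction K with
  | zero => simp [Finset.Ioc_eq_empty_of_le (Nat.le_of_lt_succ (Nat.lt_succ_of_le (Nat.zero_le m))), Nat.max_eq_left (Nat.zero_le m)]
  | succ K ih =>
    by_cases hK : K + 1 ≤ m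
    · rw [Finset.Ioc_eq_empty (by omega), Nat.max_eq_left hK]
      simp
    · have hmK : m ≤ K := by omega
      rw [Finset.sum_Ioc_succ_top hmK]
      rw [Nat.max_eq_right hmK] at ih
      rw [Nat.max_eq_right (by omega : m ≤ K + 1)]
      have hK1 : (1:ℝ) ≤ (K : ℝ) := by exact_mod_cast hm.trans hmK
      have hkey := key_ineq α hα (K : ℝ) hK1
      have hcast : ((K + 1 : ℕ) : ℝ) = (K : ℝ) + 1 := by push_cast; ring
      rw [hcast]
      nlinarith

private lemma harm_sum (n : ℕ) : ∑ k ∈ Finset.Icc 1 n, ((k : ℝ))⁻¹ ≤ 1 + Real.log n := by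
  have h := harmonic_le_one_add_log n
  rw [harmonic_eq_sum_Icc] at h
  push_cast at h
  exact h

private lemma bound_lt (C α : ℝ) (hC : 0 < C) (hα : 0 < α) (a b : ℝ)
    (ha : 1 ≤ a) (hab : a < b) :
    (C / a ^ (1 + α)) / |C / a ^ (1 + α) - C / b ^ (1 + α)| ≤ b / (b - a) := by
  have ha0 : (0:ℝ) < a := by linarith
  have hb0 : (0:ℝ) < b := by linarith
  have hpa : (0:ℝ) < a ^ (1 + α) := Real.rpow_pos_of_pos ha0 _
  have hpb : (0:ℝ) < b ^ (1 + α) := Real.rpow_pos_of_pos hb0 _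
  have hp : a ^ (1 + α) < b ^ (1 + α) := Real.rpow_lt_rpow ha0.le hab (by linarith)
  have hd : C / b ^ (1 + α) < C / a ^ (1 + α) := div_lt_div_of_pos_left hC hpa hp
  rw [abs_of_pos (by linarith)]
  have ea : a / a ^ (1 + α) = a ^ (-α) := by
    rw [show -α = 1 - (1 + α) by ring, Real.rpow_sub ha0, Real.rpow_one]
  have eb : b / b ^ (1 + α) = b ^ (-α) := by
    rw [show -α = 1 - (1 + α) by ring, Real.rpow_sub hb0, Real.rpow_one]
  have hmono : b ^ (-α) ≤ a ^ (-α) := Real.rpow_le_rpow_of_nonpos ha0 hab.le (by linarith)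
  have key : b * (C / b ^ (1 + α)) ≤ a * (C / a ^ (1 + α)) := by
    have : C * (b / b ^ (1 + α)) ≤ C * (a / a ^ (1 + α)) := by
      rw [ea, eb]; exact mul_le_mul_of_nonneg_left hmono hC.le
    calc b * (C / b ^ (1 + α)) = C * (b / b ^ (1 + α)) := by ring
      _ ≤ C * (a / a ^ (1 + α)) := this
      _ = a * (C / a ^ (1 + α)) := by ring
  rw [div_le_div_iff₀ (by linarith) (by linarith)]
  nlinarith

private lemma bound_gt (C α : ℝ) (hC : 0 < C) (hα : 0 < α) (a b : ℝ)
    (hb : 1 ≤ b) (hba : b < a) :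
    (C / a ^ (1 + α)) / |C / a ^ (1 + α) - C / b ^ (1 + α)| ≤ b / (a - b) := by
  have hb0 : (0:ℝ) < b := by linarith
  have ha0 : (0:ℝ) < a := by linarith
  have hpa : (0:ℝ) < a ^ (1 + α) := Real.rpow_pos_of_pos ha0 _
  have hpb : (0:ℝ) < b ^ (1 + α) := Real.rpow_pos_of_pos hb0 _
  have hp : b ^ (1 + α) < a ^ (1 + α) := Real.rpow_lt_rpow hb0.le hba (by linarith)
  have hd : C / a ^ (1 + α) < C / b ^ (1 + α) := div_lt_div_of_pos_left hC hpb hp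
  rw [abs_of_neg (by linarith), neg_sub]
  have ea : a / a ^ (1 + α) = a ^ (-α) := by
    rw [show -α = 1 - (1 + α) by ring, Real.rpow_sub ha0, Real.rpow_one]
  have eb : b / b ^ (1 + α) = b ^ (-α) := by
    rw [show -α = 1 - (1 + α) by ring, Real.rpow_sub hb0, Real.rpow_one]
  have hmono : a ^ (-α) ≤ b ^ (-α) := Real.rpow_le_rpow_of_nonpos hb0 hba.le (by linarith)
  have key : a * (C / a ^ (1 + α)) ≤ b * (C / b ^ (1 + α)) := by
    have : C * (a / a ^ (1 + α)) ≤ C * (b / b ^ (1 + α)) := by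
      rw [ea, eb]; exact mul_le_mul_of_nonneg_left hmono hC.le
    calc a * (C / a ^ (1 + α)) = C * (a / a ^ (1 + α)) := by ring
      _ ≤ C * (b / b ^ (1 + α)) := this
      _ = b * (C / b ^ (1 + α)) := by ring
  rw [div_le_div_iff₀ (by linarith) (by linarith)]
  nlinarith

private lemma bound_far (C α : ℝ) (hC : 0 < C) (hα : 0 < α) (a b : ℝ)
    (hb : 1 ≤ b) (hba : 2 * b ≤ a) :
    (C / a ^ (1 + α)) / |C / a ^ (1 + α) - C / b ^ (1 + α)| ≤
      2 * b ^ (1 + α) / a ^ (1 + α) := by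
  have hb0 : (0:ℝ) < b := by linarith
  have ha0 : (0:ℝ) < a := by linarith
  have hba' : b < a := by linarith
  have hpa : (0:ℝ) < a ^ (1 + α) := Real.rpow_pos_of_pos ha0 _
  have hpb : (0:ℝ) < b ^ (1 + α) := Real.rpow_pos_of_pos hb0 _
  have hp : b ^ (1 + α) < a ^ (1 + α) := Real.rpow_lt_rpow hb0.le hba' (by linarith)
  have hd : C / a ^ (1 + α) < C / b ^ (1 + α) := div_lt_div_of_pos_left hC hpb hp
  rw [abs_of_neg (by linarith), neg_sub]
  have h2b : 2 * b ^ (1 + α) ≤ a ^ (1 + α) := by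
    have h1 : (2 * b) ^ (1 + α) ≤ a ^ (1 + α) :=
      Real.rpow_le_rpow (by linarith) hba (by linarith)
    have h2 : (2 * b) ^ (1 + α) = (2:ℝ) ^ (1 + α) * b ^ (1 + α) :=
      Real.mul_rpow (by norm_num) hb0.le
    have h3 : (2:ℝ) ≤ (2:ℝ) ^ (1 + α) := by
      nth_rewrite 1 [show (2:ℝ) = (2:ℝ) ^ (1:ℝ) by rw [Real.rpow_one]]
      exact Real.rpow_le_rpow_of_exponent_le (by norm_num) (by linarith)
    nlinarith
  rw [div_le_div_iff₀ (by linarith) hpa]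
  have e1 : C / a ^ (1 + α) * a ^ (1 + α) = C := div_mul_cancel₀ C hpa.ne'
  have e2 : C / b ^ (1 + α) * b ^ (1 + α) = C := div_mul_cancel₀ C hpb.ne'
  have e3 : 2 * b ^ (1 + α) * (C / a ^ (1 + α)) ≤ C := by
    have := mul_le_mul_of_nonneg_right h2b (le_of_lt (by positivity : (0:ℝ) < C / a ^ (1 + α)))
    nlinarith
  nlinarith [mul_pos hpb (div_pos hC hpa)]

private lemma sum_reflect (n : ℕ) :
    ∑ l ∈ Finset.Ico 1 n, (n : ℝ) / ((n : ℝ) - (l : ℝ)) =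
      ∑ k ∈ Finset.Ico 1 n, (n : ℝ) / (k : ℝ) := by
  refine Finset.sum_nbij' (fun l => n - l) (fun k => n - k) ?_ ?_ ?_ ?_ ?_
  · intro a ha
    simp only [Finset.mem_Ico] at ha ⊢
    omega
  · intro a ha
    simp only [Finset.mem_Ico] at ha ⊢
    omega
  · intro a ha
    simp only [Finset.mem_Ico] at ha
    show n - (n - a) = a
    omega
  · intro a ha
    simp only [Finset.mem_Ico] at ha
    show n - (n - a) = a
    omega
  · intro a ha
    simp only [Finset.mem_Ico] at ha
    congr 1
    rw [Nat.cast_sub (by omega)]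

private lemma sum_shift (n : ℕ) :
    ∑ l ∈ Finset.Ioc n (2 * n), (n : ℝ) / ((l : ℝ) - (n : ℝ)) =
      ∑ k ∈ Finset.Icc 1 n, (n : ℝ) / (k : ℝ) := by
  refine Finset.sum_nbij' (fun l => l - n) (fun k => k + n) ?_ ?_ ?_ ?_ ?_
  · intro a ha
    simp only [Finset.mem_Ioc] at ha
    simp only [Finset.mem_Icc]
    omega
  · intro a ha
    simp only [Finset.mem_Icc] at ha
    simp only [Finset.mem_Ioc]
    omega
  · intro a ha
    simp only [Finset.mem_Ioc] at ha
    show a - n + n = a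
    omega
  · intro a ha
    simp only [Finset.mem_Icc] at ha
    show a + n - n = a
    omega
  · intro a ha
    simp only [Finset.mem_Ioc] at ha
    congr 1
    rw [Nat.cast_sub (by omega)]

/-- for λ_j = C·j^{-(1+α)} with C, α > 0, there is M such that for all
sufficiently large j, ∑_{l ≥ 1, l ≠ j} λ_l / |λ_l − λ_j| ≤ M·j·log j. -/
theorem statement5
    (C α : ℝ) (hC : 0 < C) (hα : 0 < α)
    (lam : ℕ → ℝ) (hlam : ∀ j : ℕ, 1 ≤ j → lam j = C / (j : ℝ) ^ (1 + α)) :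
    ∃ M : ℝ, ∃ N : ℕ, ∀ j : ℕ, N ≤ j →
      (∑' l : {l : ℕ // 1 ≤ l ∧ l ≠ j}, lam l / |lam l - lam j|) ≤
        M * (j : ℝ) * Real.log j := by
  refine ⟨4 + 2 / α, 3, fun j hj => ?_⟩
  have hj1 : 1 ≤ j := by omega
  have hjR : (3:ℝ) ≤ (j:ℝ) := by exact_mod_cast hj
  have hj0 : (0:ℝ) < (j:ℝ) := by linarith
  have hlog : 1 ≤ Real.log j := by
    have h1 : Real.exp 1 ≤ 3 := by
      have := Real.exp_one_lt_d9
      linarith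
    calc (1:ℝ) = Real.log (Real.exp 1) := (Real.log_exp 1).symm
      _ ≤ Real.log j := Real.log_le_log (Real.exp_pos 1) (h1.trans hjR)
  have hMpos : (0:ℝ) < 4 + 2 / α := by positivity
  have hRHS0 : 0 ≤ (4 + 2 / α) * (j:ℝ) * Real.log j :=
    mul_nonneg (mul_nonneg hMpos.le hj0.le) (by linarith)
  refine tsum_le_of_sum_le' hRHS0 ?_
  intro s
  classical
  set t := s.image Subtype.val with ht
  have himg : ∑ x ∈ s, lam ↑x / |lam ↑x - lam j| = ∑ l ∈ t, lam l / |lam l - lam j| := by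
    rw [ht, Finset.sum_image]
    intro x _ y _ h
    exact Subtype.ext h
  have htm : ∀ l ∈ t, 1 ≤ l ∧ l ≠ j := by
    intro l hl
    rw [ht, Finset.mem_image] at hl
    obtain ⟨x, _, rfl⟩ := hl
    exact x.2
  rw [himg]
  rw [← Finset.sum_filter_add_sum_filter_not t (fun l => l < j)]
  rw [← Finset.sum_filter_add_sum_filter_not (t.filter (fun l => ¬ l < j)) (fun l => l ≤ 2 * j)]
  -- Part 1 : l < j
  have hS1 : ∑ l ∈ t.filter (fun l => l < j), lam l / |lam l - lam j| ≤
      2 * (j:ℝ) * Real.log j := by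
    have step1 : ∑ l ∈ t.filter (fun l => l < j), lam l / |lam l - lam j| ≤
        ∑ l ∈ t.filter (fun l => l < j), (j:ℝ) / ((j:ℝ) - (l:ℝ)) := by
      apply Finset.sum_le_sum
      intro l hl
      rw [Finset.mem_filter] at hl
      obtain ⟨hl1, _⟩ := htm l hl.1
      rw [hlam l hl1, hlam j hj1]
      exact bound_lt C α hC hα l j (by exact_mod_cast hl1) (by exact_mod_cast hl.2)
    have step2 : ∑ l ∈ t.filter (fun l => l < j), (j:ℝ) / ((j:ℝ) - (l:ℝ)) ≤
        ∑ l ∈ Finset.Ico 1 j, (j:ℝ) / ((j:ℝ) - (l:ℝ)) := by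
      apply Finset.sum_le_sum_of_subset_of_nonneg
      · intro l hl
        rw [Finset.mem_filter] at hl
        obtain ⟨hl1, _⟩ := htm l hl.1
        rw [Finset.mem_Ico]
        exact ⟨hl1, hl.2⟩
      · intro i hi _
        rw [Finset.mem_Ico] at hi
        have : (i:ℝ) < (j:ℝ) := by exact_mod_cast hi.2
        exact div_nonneg hj0.le (by linarith)
    have step3 : ∑ l ∈ Finset.Ico 1 j, (j:ℝ) / ((j:ℝ) - (l:ℝ)) ≤ (j:ℝ) * (1 + Real.log j) := by
      rw [sum_reflect j]
      have hIco : Finset.Ico 1 j = Finset.Icc 1 (j - 1) := by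
        rw [← Finset.Ico_add_one_right_eq_Icc]
        congr 1
        omega
      rw [hIco]
      have : ∑ k ∈ Finset.Icc 1 (j - 1), (j:ℝ) / (k:ℝ) =
          (j:ℝ) * ∑ k ∈ Finset.Icc 1 (j - 1), ((k:ℝ))⁻¹ := by
        rw [Finset.mul_sum]
        apply Finset.sum_congr rfl
        intro k _
        rw [div_eq_mul_inv]
      rw [this]
      have hh := harm_sum (j - 1)
      have hlog2 : Real.log ((j:ℕ) - 1 : ℕ) ≤ Real.log j := by
        apply Real.log_le_log
        · have : (2:ℕ) ≤ j - 1 := by omega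
          have : (2:ℝ) ≤ ((j - 1 : ℕ):ℝ) := by exact_mod_cast this
          linarith
        · have : (j - 1 : ℕ) ≤ j := by omega
          exact_mod_cast this
      have hh2 : ∑ k ∈ Finset.Icc 1 (j - 1), ((k:ℝ))⁻¹ ≤ 1 + Real.log j := by linarith
      nlinarith [Finset.sum_nonneg (fun (k : ℕ) (_ : k ∈ Finset.Icc 1 (j-1)) =>
        (by positivity : (0:ℝ) ≤ ((k:ℝ))⁻¹))]
    calc ∑ l ∈ t.filter (fun l => l < j), lam l / |lam l - lam j|
        ≤ (j:ℝ) * (1 + Real.log j) := le_trans step1 (le_trans step2 step3)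
      _ ≤ 2 * (j:ℝ) * Real.log j := by nlinarith
  -- Part 2 : j < l ≤ 2j
  have hS2 : ∑ l ∈ (t.filter (fun l => ¬ l < j)).filter (fun l => l ≤ 2 * j),
      lam l / |lam l - lam j| ≤ 2 * (j:ℝ) * Real.log j := by
    have step1 : ∑ l ∈ (t.filter (fun l => ¬ l < j)).filter (fun l => l ≤ 2 * j),
        lam l / |lam l - lam j| ≤
        ∑ l ∈ (t.filter (fun l => ¬ l < j)).filter (fun l => l ≤ 2 * j),
          (j:ℝ) / ((l:ℝ) - (j:ℝ)) := by
      apply Finset.sum_le_sum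
      intro l hl
      rw [Finset.mem_filter, Finset.mem_filter] at hl
      obtain ⟨⟨hlt, hnlt⟩, _⟩ := hl
      obtain ⟨hl1, hlne⟩ := htm l hlt
      have hjl : j < l := by omega
      rw [hlam l hl1, hlam j hj1]
      exact bound_gt C α hC hα l j (by exact_mod_cast hj1) (by exact_mod_cast hjl)
    have step2 : ∑ l ∈ (t.filter (fun l => ¬ l < j)).filter (fun l => l ≤ 2 * j),
        (j:ℝ) / ((l:ℝ) - (j:ℝ)) ≤ ∑ l ∈ Finset.Ioc j (2 * j), (j:ℝ) / ((l:ℝ) - (j:ℝ)) := by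
      apply Finset.sum_le_sum_of_subset_of_nonneg
      · intro l hl
        rw [Finset.mem_filter, Finset.mem_filter] at hl
        obtain ⟨⟨hlt, hnlt⟩, hle⟩ := hl
        obtain ⟨hl1, hlne⟩ := htm l hlt
        rw [Finset.mem_Ioc]
        omega
      · intro i hi _
        rw [Finset.mem_Ioc] at hi
        have : (j:ℝ) < (i:ℝ) := by exact_mod_cast hi.1
        have h2 : (0:ℝ) < (i:ℝ) - (j:ℝ) := by linarith
        positivity
    have step3 : ∑ l ∈ Finset.Ioc j (2 * j), (j:ℝ) / ((l:ℝ) - (j:ℝ)) ≤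
        (j:ℝ) * (1 + Real.log j) := by
      rw [sum_shift j]
      have : ∑ k ∈ Finset.Icc 1 j, (j:ℝ) / (k:ℝ) =
          (j:ℝ) * ∑ k ∈ Finset.Icc 1 j, ((k:ℝ))⁻¹ := by
        rw [Finset.mul_sum]
        apply Finset.sum_congr rfl
        intro k _
        rw [div_eq_mul_inv]
      rw [this]
      have hh := harm_sum j
      nlinarith [Finset.sum_nonneg (fun (k : ℕ) (_ : k ∈ Finset.Icc 1 j) =>
        (by positivity : (0:ℝ) ≤ ((k:ℝ))⁻¹))]
    calc ∑ l ∈ (t.filter (fun l => ¬ l < j)).filter (fun l => l ≤ 2 * j),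
          lam l / |lam l - lam j|
        ≤ (j:ℝ) * (1 + Real.log j) := le_trans step1 (le_trans step2 step3)
      _ ≤ 2 * (j:ℝ) * Real.log j := by nlinarith
  -- Part 3 : l > 2j
  have hS3 : ∑ l ∈ (t.filter (fun l => ¬ l < j)).filter (fun l => ¬ l ≤ 2 * j),
      lam l / |lam l - lam j| ≤ (2 / α) * (j:ℝ) * Real.log j := by
    set t3 := (t.filter (fun l => ¬ l < j)).filter (fun l => ¬ l ≤ 2 * j) with ht3
    have hptj : (0:ℝ) < (j:ℝ) ^ (1 + α) := Real.rpow_pos_of_pos hj0 _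
    have step1 : ∑ l ∈ t3, lam l / |lam l - lam j| ≤
        ∑ l ∈ t3, 2 * (j:ℝ) ^ (1 + α) * ((l:ℝ)) ^ (-(1 + α)) := by
      apply Finset.sum_le_sum
      intro l hl
      rw [ht3, Finset.mem_filter, Finset.mem_filter] at hl
      obtain ⟨⟨hlt, _⟩, hgt⟩ := hl
      obtain ⟨hl1, _⟩ := htm l hlt
      have h2j : 2 * j < l := by omega
      have hl0 : (0:ℝ) < (l:ℝ) := by
        have : (0:ℕ) < l := by omega
        exact_mod_cast this
      have hcast : 2 * (j:ℝ) ≤ (l:ℝ) := by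
        have : (2 * j : ℕ) ≤ l := by omega
        exact_mod_cast this
      have hb := bound_far C α hC hα (l:ℝ) (j:ℝ) (by exact_mod_cast hj1) hcast
      rw [hlam l hl1, hlam j hj1]
      refine hb.trans (le_of_eq ?_)
      rw [Real.rpow_neg hl0.le, div_eq_mul_inv]
    have step2 : ∑ l ∈ t3, ((l:ℝ)) ^ (-(1 + α)) ≤
        ∑ l ∈ Finset.Ioc (2 * j) (t3.sup id), ((l:ℝ)) ^ (-(1 + α)) := by
      apply Finset.sum_le_sum_of_subset_of_nonneg
      · intro l hl
        have hl' := hl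
        rw [ht3, Finset.mem_filter, Finset.mem_filter] at hl'
        rw [Finset.mem_Ioc]
        exact ⟨by omega, Finset.le_sup (f := id) hl⟩
      · intro i _ _
        exact Real.rpow_nonneg (Nat.cast_nonneg i) _
    have step3 : ∑ l ∈ Finset.Ioc (2 * j) (t3.sup id), ((l:ℝ)) ^ (-(1 + α)) ≤
        ((2 * j : ℕ):ℝ) ^ (-α) / α := tail_sum α hα (2 * j) (by omega) _
    have step4 : ((2 * j : ℕ):ℝ) ^ (-α) ≤ (j:ℝ) ^ (-α) := by
      apply Real.rpow_le_rpow_of_nonpos hj0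
      · push_cast
        linarith
      · linarith
    have hjid : (j:ℝ) ^ (1 + α) * (j:ℝ) ^ (-α) = (j:ℝ) := by
      rw [← Real.rpow_add hj0, show (1 + α) + (-α) = 1 by ring, Real.rpow_one]
    calc ∑ l ∈ t3, lam l / |lam l - lam j|
        ≤ ∑ l ∈ t3, 2 * (j:ℝ) ^ (1 + α) * ((l:ℝ)) ^ (-(1 + α)) := step1
      _ = 2 * (j:ℝ) ^ (1 + α) * ∑ l ∈ t3, ((l:ℝ)) ^ (-(1 + α)) := by
          rw [Finset.mul_sum]
      _ ≤ 2 * (j:ℝ) ^ (1 + α) * (((2 * j : ℕ):ℝ) ^ (-α) / α) := by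
          apply mul_le_mul_of_nonneg_left (le_trans step2 step3) (by positivity)
      _ ≤ 2 * (j:ℝ) ^ (1 + α) * ((j:ℝ) ^ (-α) / α) := by
          apply mul_le_mul_of_nonneg_left _ (by positivity)
          gcongr
      _ = (2 / α) * ((j:ℝ) ^ (1 + α) * (j:ℝ) ^ (-α)) := by ring
      _ = (2 / α) * (j:ℝ) := by rw [hjid]
      _ ≤ (2 / α) * (j:ℝ) * Real.log j := by
          have h1 : (0:ℝ) ≤ 2 / α := by positivity
          have h2 := mul_le_mul_of_nonneg_left hlog (mul_nonneg h1 hj0.le)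
          linarith [h2]
  have hfinal : (4 + 2 / α) * (j:ℝ) * Real.log j =
      2 * (j:ℝ) * Real.log j + (2 * (j:ℝ) * Real.log j + (2 / α) * (j:ℝ) * Real.log j) := by
    ring
  rw [hfinal]
  exact add_le_add hS1 (add_le_add hS2 hS3)
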